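/- (Functoriality of derivative ideals and order under smooth extension by variables.) Let k be a field of characteristic zero, R = k[x_1,…,x_n], S = k[x_1,…,x_n, y_1,…,y_m], and let I ⊆ R be an ideal. Denote by D_S the derivative ideal operation on S using all n+m partial derivatives. Then D_S^a(I·S) = (D^a(I))·S for every natural number a. Consequently, if I is nonzero, then for every p ∈ k^n and q ∈ k^m one has ord_{(p,q)}(I·S) = ord_p(I). -/

import Mathlib

/-!
Derivatives along the new variables kill everything coming from `R`, derivatives along the old
ones commute with `rename`, and by the Leibniz rule a derivation maps an ideal into a given ideal
as soon as it does so on generators; hence `D_S(I·S) = D(I)·S`, and this iterates.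

For the order, `c ≤ ord_p f` says that the translate `f(x + p)` lies in `𝔪₀ ^ c`, the ideal of
polynomials without monomials of degree `< c`. Renaming variables commutes with translation and
maps `𝔪₀ ^ c` into `𝔪₀ ^ c`, so every element of `I·S` has order at least `ord_p I`, and this
bound is attained by an element of `I` itself.
-/

open MvPolynomial

/-- The derivative ideal: the ideal generated by `I` together with all first partial
derivatives of its elements (with respect to all variables). -/
noncomputable def derivIdeal {k : Type*} [CommSemiring k] {σ : Type*}
    (I : Ideal (MvPolynomial σ k)) : Ideal (MvPolynomial σ k) :=
  I ⊔ Ideal.span {g | ∃ f ∈ I, ∃ i : σ, g = pderiv i f}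

/-- The order of a nonzero polynomial at a point `p`: the smallest total degree of a monomial
appearing in the shifted polynomial `f(x+p)`. -/
noncomputable def polyOrdAt {k : Type*} [CommSemiring k] {σ : Type*} (p : σ → k)
    (f : MvPolynomial σ k) : ℕ :=
  sInf {m | ∃ d ∈ (aeval (fun i => X i + C (p i)) f : MvPolynomial σ k).support,
    (d.sum fun _ e => e) = m}

/-- The order of a nonzero ideal at a point: `min {ord_p f : 0 ≠ f ∈ I}`. -/
noncomputable def idealOrdAt {k : Type*} [CommSemiring k] {σ : Type*} (p : σ → k)
    (I : Ideal (MvPolynomial σ k)) : ℕ :=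
  sInf {m | ∃ f ∈ I, f ≠ 0 ∧ polyOrdAt p f = m}

namespace Derivation

variable {R A : Type*} [CommSemiring R] [CommSemiring A] [Algebra R A]

theorem apply_mem_of_mem_span (D : Derivation R A A) {s : Set A} {J : Ideal A}
    (hs : s ⊆ J) (hD : ∀ x ∈ s, D x ∈ J) {x : A} (hx : x ∈ Ideal.span s) : D x ∈ J := by
  induction hx using Submodule.span_induction with
  | mem x hx => exact hD x hx
  | zero => simp
  | add x y _ _ hx hy => simpa using J.add_mem hx hy
  | smul a x hx hDx =>
    rw [smul_eq_mul, leibniz, smul_eq_mul, smul_eq_mul]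
    exact J.add_mem (J.mul_mem_left a hDx) (J.mul_mem_right _ (Ideal.span_le.2 hs hx))

end Derivation

namespace MvPolynomial

section derivIdeal

variable {R : Type*} [CommSemiring R] {σ τ : Type*}

theorem le_derivIdeal (I : Ideal (MvPolynomial σ R)) : I ≤ derivIdeal I := le_sup_left

theorem pderiv_mem_derivIdeal {I : Ideal (MvPolynomial σ R)} {f : MvPolynomial σ R}
    (hf : f ∈ I) (i : σ) : pderiv i f ∈ derivIdeal I :=
  le_sup_right (a := I) (Ideal.subset_span ⟨f, hf, i, rfl⟩)

theorem pderiv_rename_of_notMem_range {e : σ → τ} {j : τ} (hj : j ∉ Set.range e)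
    (f : MvPolynomial σ R) : pderiv j (rename e f) = 0 := by
  classical
  refine pderiv_eq_zero_of_notMem_vars fun h => hj ?_
  obtain ⟨i, -, rfl⟩ := mem_vars_rename e f h
  exact ⟨i, rfl⟩

theorem pderiv_rename_mem_map_derivIdeal {e : σ → τ} (he : Function.Injective e)
    {I : Ideal (MvPolynomial σ R)} {f : MvPolynomial σ R} (hf : f ∈ I) (j : τ) :
    pderiv j (rename e f) ∈ Ideal.map (rename e) (derivIdeal I) := by
  by_cases hj : j ∈ Set.range e
  · obtain ⟨i, rfl⟩ := hj
    rw [pderiv_rename he]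
    exact Ideal.mem_map_of_mem _ (pderiv_mem_derivIdeal hf i)
  · rw [pderiv_rename_of_notMem_range hj]
    exact zero_mem _

theorem derivIdeal_map_rename {e : σ → τ} (he : Function.Injective e)
    (I : Ideal (MvPolynomial σ R)) :
    derivIdeal (Ideal.map (rename e) I) = Ideal.map (rename e) (derivIdeal I) := by
  refine le_antisymm (sup_le (Ideal.map_mono (le_derivIdeal I)) ?_) ?_
  · rw [Ideal.span_le]
    rintro _ ⟨g, hg, j, rfl⟩
    rw [SetLike.mem_coe]
    refine (pderiv j).apply_mem_of_mem_span ?_ ?_ hg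
    · rintro _ ⟨f, hf, rfl⟩
      exact Ideal.mem_map_of_mem _ (le_derivIdeal I hf)
    · rintro _ ⟨f, hf, rfl⟩
      exact pderiv_rename_mem_map_derivIdeal he hf j
  · rw [derivIdeal, Ideal.map_sup, Ideal.map_span]
    refine sup_le (le_derivIdeal _) (Ideal.span_le.2 ?_)
    rintro _ ⟨_, ⟨f, hf, i, rfl⟩, rfl⟩
    rw [← pderiv_rename he]
    exact pderiv_mem_derivIdeal (Ideal.mem_map_of_mem _ hf) (e i)

theorem semiconj_map_rename_derivIdeal {e : σ → τ} (he : Function.Injective e) :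
    Function.Semiconj (Ideal.map (rename e : MvPolynomial σ R →ₐ[R] MvPolynomial τ R))
      derivIdeal derivIdeal :=
  fun I => (derivIdeal_map_rename he I).symm

end derivIdeal

section shift

variable {k : Type*} [CommSemiring k] {σ τ : Type*}

noncomputable abbrev shift (p : σ → k) : MvPolynomial σ k →ₐ[k] MvPolynomial σ k :=
  aeval fun i => X i + C (p i)

theorem shift_rename (e : σ → τ) (r : τ → k) (f : MvPolynomial σ k) :
    shift r (rename e f) = rename e (shift (r ∘ e) f) := by
  rw [← AlgHom.comp_apply, ← AlgHom.comp_apply]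
  congr 1
  ext i
  simp

theorem polyOrdAt_rename {e : σ → τ} (he : Function.Injective e) (r : τ → k)
    (f : MvPolynomial σ k) : polyOrdAt r (rename e f) = polyOrdAt (r ∘ e) f := by
  classical
  unfold polyOrdAt
  rw [shift_rename, support_rename_of_injective he]
  simp [Finsupp.sum_mapDomain_index]

theorem rename_mem_pow_idealOfVars (e : σ → τ) {c : ℕ} {f : MvPolynomial σ k}
    (hf : f ∈ idealOfVars σ k ^ c) : rename e f ∈ idealOfVars τ k ^ c := by
  have hle : Ideal.map (rename e) (idealOfVars σ k) ≤ idealOfVars τ k := by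
    rw [Ideal.map_span, Ideal.span_le]
    rintro _ ⟨_, ⟨i, rfl⟩, rfl⟩
    exact Ideal.subset_span ⟨e i, (rename_X e i).symm⟩
  have hmap := Ideal.mem_map_of_mem (rename e) hf
  rw [Ideal.map_pow] at hmap
  exact Ideal.pow_right_mono hle c hmap

end shift

section order

variable {k : Type*} [CommRing k] {σ τ : Type*}

theorem shift_injective (p : σ → k) : Function.Injective (shift p) := by
  have hinv : (shift (-p)).comp (shift p) = AlgHom.id k _ := by
    ext i
    simp
  exact Function.LeftInverse.injective (g := shift (-p)) (DFunLike.congr_fun hinv)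

theorem le_polyOrdAt_iff {p : σ → k} {f : MvPolynomial σ k} (hf : f ≠ 0) (c : ℕ) :
    c ≤ polyOrdAt p f ↔ shift p f ∈ idealOfVars σ k ^ c := by
  have hne : (shift p f).support.Nonempty := by
    rw [Finset.nonempty_iff_ne_empty, Ne, support_eq_empty]
    exact (map_ne_zero_iff _ (shift_injective p)).2 hf
  rw [mem_pow_idealOfVars_iff]
  constructor
  · intro hc d hd
    exact hc.trans (Nat.sInf_le ⟨d, hd, rfl⟩)
  · intro hc
    obtain ⟨d, hd⟩ := hne
    exact le_csInf ⟨_, d, hd, rfl⟩ fun _ ⟨d, hd, hdm⟩ => hdm ▸ hc d hd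

theorem shift_mem_pow_idealOrdAt (p : σ → k) {I : Ideal (MvPolynomial σ k)}
    {f : MvPolynomial σ k} (hf : f ∈ I) : shift p f ∈ idealOfVars σ k ^ idealOrdAt p I := by
  rcases eq_or_ne f 0 with rfl | hf0
  · rw [map_zero]
    exact zero_mem _
  · exact (le_polyOrdAt_iff hf0 _).1 (Nat.sInf_le ⟨f, hf, hf0, rfl⟩)

theorem exists_polyOrdAt_eq_idealOrdAt (p : σ → k) {I : Ideal (MvPolynomial σ k)}
    (hI : I ≠ ⊥) : ∃ f ∈ I, f ≠ 0 ∧ polyOrdAt p f = idealOrdAt p I := by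
  obtain ⟨f, hf, hf0⟩ := Submodule.exists_mem_ne_zero_of_ne_bot hI
  exact Nat.sInf_mem (s := {m | ∃ f ∈ I, f ≠ 0 ∧ polyOrdAt p f = m}) ⟨_, f, hf, hf0, rfl⟩

theorem map_rename_le_comap_shift (e : σ → τ) (r : τ → k) (I : Ideal (MvPolynomial σ k)) :
    Ideal.map (rename e) I ≤ Ideal.comap (shift r) (idealOfVars τ k ^ idealOrdAt (r ∘ e) I) := by
  rw [Ideal.map_le_iff_le_comap]
  intro f hf
  rw [Ideal.mem_comap, Ideal.mem_comap, shift_rename]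
  exact rename_mem_pow_idealOfVars e (shift_mem_pow_idealOrdAt (r ∘ e) hf)

theorem idealOrdAt_map_rename {e : σ → τ} (he : Function.Injective e) (r : τ → k)
    (I : Ideal (MvPolynomial σ k)) :
    idealOrdAt r (Ideal.map (rename e) I) = idealOrdAt (r ∘ e) I := by
  rcases eq_or_ne I ⊥ with rfl | hI
  · simp [idealOrdAt]
  obtain ⟨f, hfI, hf0, hford⟩ := exists_polyOrdAt_eq_idealOrdAt (r ∘ e) hI
  refine IsLeast.csInf_eq ⟨⟨rename e f, Ideal.mem_map_of_mem _ hfI,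
    (map_ne_zero_iff _ (rename_injective e he)).2 hf0, by rw [polyOrdAt_rename he, hford]⟩, ?_⟩
  rintro _ ⟨g, hg, hg0, rfl⟩
  exact (le_polyOrdAt_iff hg0 _).2 (map_rename_le_comap_shift e r I hg)

end order

end MvPolynomial

theorem derivIdeal_iterate_map_rename_general {k : Type*} [Field k] {n m : ℕ}
    (I : Ideal (MvPolynomial (Fin n) k)) :
    (∀ a : ℕ,
      derivIdeal^[a] (Ideal.map (rename (Sum.inl : Fin n → Fin n ⊕ Fin m) :
          MvPolynomial (Fin n) k →ₐ[k] MvPolynomial (Fin n ⊕ Fin m) k) I) =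
        Ideal.map (rename (Sum.inl : Fin n → Fin n ⊕ Fin m) :
          MvPolynomial (Fin n) k →ₐ[k] MvPolynomial (Fin n ⊕ Fin m) k) (derivIdeal^[a] I)) ∧
    (I ≠ ⊥ → ∀ (p : Fin n → k) (q : Fin m → k),
      idealOrdAt (Sum.elim p q)
        (Ideal.map (rename (Sum.inl : Fin n → Fin n ⊕ Fin m) :
          MvPolynomial (Fin n) k →ₐ[k] MvPolynomial (Fin n ⊕ Fin m) k) I) =
      idealOrdAt p I) :=
  ⟨fun a => ((semiconj_map_rename_derivIdeal Sum.inl_injective).iterate_right a I).symm,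
    fun _ p q => idealOrdAt_map_rename Sum.inl_injective (Sum.elim p q) I⟩

/-- Functoriality of derivative ideals and of order under the smooth extension
`R = k[x₁,…,xₙ] ↪ S = k[x₁,…,xₙ,y₁,…,y_m]`: one has `D_Sᵃ(I·S) = (Dᵃ(I))·S` for all `a`, and
consequently `ord_{(p,q)}(I·S) = ord_p(I)` for nonzero `I`. -/
theorem derivIdeal_iterate_map_rename {k : Type*} [Field k] [CharZero k] {n m : ℕ}
    (I : Ideal (MvPolynomial (Fin n) k)) :
    (∀ a : ℕ,
      derivIdeal^[a] (Ideal.map (rename (Sum.inl : Fin n → Fin n ⊕ Fin m) :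
          MvPolynomial (Fin n) k →ₐ[k] MvPolynomial (Fin n ⊕ Fin m) k) I) =
        Ideal.map (rename (Sum.inl : Fin n → Fin n ⊕ Fin m) :
          MvPolynomial (Fin n) k →ₐ[k] MvPolynomial (Fin n ⊕ Fin m) k) (derivIdeal^[a] I)) ∧
    (I ≠ ⊥ → ∀ (p : Fin n → k) (q : Fin m → k),
      idealOrdAt (Sum.elim p q)
        (Ideal.map (rename (Sum.inl : Fin n → Fin n ⊕ Fin m) :
          MvPolynomial (Fin n) k →ₐ[k] MvPolynomial (Fin n ⊕ Fin m) k) I) =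
      idealOrdAt p I) :=
  derivIdeal_iterate_map_rename_general I
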